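/- arXiv:2504.02238 — 2 statements merged into one kernel-verified Lean document; each statement's English description precedes it below -/
import Mathlib

section
/- Scaling down the prior attenuates updating (Corollary 3). Let f_X be a log-concave density symmetric about 0 (so the prior mean is 0), and let f_ε be a log-concave density symmetric about 0. For k > 0, let E_k[s] denote the posterior mean under the scaled prior density x ↦ (1/k)·f_X(x/k) and noise density f_ε. Then for all 0 < k̃ < k: for every s ≤ 0, E_k[s] ≤ E_k̃[s] ≤ 0, and for every s ≥ 0, E_k[s] ≥ E_k̃[s] ≥ 0. -/
open MeasureTheory Real Set

noncomputable section

/-- A density: everywhere positive, continuously differentiable, integrates to 1,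
with finite first absolute moment. -/
def IsDensity (f : ℝ → ℝ) : Prop :=
  (∀ x, 0 < f x) ∧ ContDiff ℝ 1 f ∧ (∫ x, f x) = 1 ∧
    MeasureTheory.Integrable (fun x => |x| * f x)

/-- `f` is symmetric about `m`. -/
def SymmAbout (m : ℝ) (f : ℝ → ℝ) : Prop := ∀ x, f (m + x) = f (m - x)

/-- `f` is quasi-concave. -/
def QuasiConcaveFn (f : ℝ → ℝ) : Prop :=
  ∀ x y t : ℝ, 0 ≤ t → t ≤ 1 → min (f x) (f y) ≤ f (t * x + (1 - t) * y)

/-- `f` is log-concave. -/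
def LogConcaveFn (f : ℝ → ℝ) : Prop := ConcaveOn ℝ Set.univ fun x => Real.log (f x)

/-- `g` is less precise than `f`: the ratio `g/f` is nondecreasing on `(0, ∞)`. -/
def LessPrecise (g f : ℝ → ℝ) : Prop := MonotoneOn (fun x => g x / f x) (Set.Ioi 0)

/-- Posterior mean at signal realization `s` under prior `fX` and noise density `fε`. -/
def postMean (fX fε : ℝ → ℝ) (s : ℝ) : ℝ :=
  (∫ x, x * fX x * fε (s - x)) / (∫ x, fX x * fε (s - x))

/-!
For a prior `p` symmetric about `0`, fold the posterior around `0`: the posterior mean at `s` is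
the average, against the weight `p x * (φ (s - x) + φ (s + x))` on `(0, ∞)`, of the posterior
mean given `|X| = x`, namely `x * (φ (s - x) - φ (s + x)) / (φ (s - x) + φ (s + x))`.
For `s ≥ 0`, log-concavity of the noise makes this nonnegative and nondecreasing in `x`, while
log-concavity of the prior makes the ratio `f (x / k) / f (x / k')` of the two scaled priors
nondecreasing on `(0, ∞)` when `k' < k`. Tilting the weight by this ratio can therefore only
raise the average, by Chebyshev's integral inequality. The case `s ≤ 0` follows from
`E[-s] = -E[s]`.
-/

theorem MonovaryOn.setIntegral_mul_setIntegral_le {α : Type*} [MeasurableSpace α]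
    {μ : Measure α} [SFinite μ] {S : Set α} {w f g : α → ℝ} (hfg : MonovaryOn f g S)
    (hS : MeasurableSet S) (hw : ∀ x ∈ S, 0 ≤ w x) (hw_int : IntegrableOn w S μ)
    (hwf : IntegrableOn (fun x => w x * f x) S μ) (hwg : IntegrableOn (fun x => w x * g x) S μ)
    (hwfg : IntegrableOn (fun x => w x * f x * g x) S μ) :
    (∫ x in S, w x * f x ∂μ) * (∫ x in S, w x * g x ∂μ) ≤
      (∫ x in S, w x ∂μ) * ∫ x in S, w x * f x * g x ∂μ := by
  have hnonneg : 0 ≤ ∫ z in S ×ˢ S, w z.1 * w z.2 * ((f z.2 - f z.1) * (g z.2 - g z.1))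
      ∂μ.prod μ :=
    setIntegral_nonneg (hS.prod hS) fun z hz =>
      mul_nonneg (mul_nonneg (hw _ hz.1) (hw _ hz.2)) (hfg.sub_mul_sub_nonneg hz.1 hz.2)
  have hexpand : (fun z : α × α => w z.1 * w z.2 * ((f z.2 - f z.1) * (g z.2 - g z.1))) =
      fun z => w z.1 * (w z.2 * f z.2 * g z.2) + w z.1 * f z.1 * g z.1 * w z.2 -
        (w z.1 * f z.1 * (w z.2 * g z.2) + w z.1 * g z.1 * (w z.2 * f z.2)) := by
    funext z; ring
  have h₁ := hw_int.mul_prod hwfg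
  have h₂ := hwfg.mul_prod hw_int
  have h₃ := hwf.mul_prod hwg
  have h₄ := hwg.mul_prod hwf
  rw [← Measure.prod_restrict, hexpand, integral_sub (h₁.fun_add h₂) (h₃.fun_add h₄),
    integral_add h₁ h₂, integral_add h₃ h₄, integral_prod_mul w (fun x => w x * f x * g x),
    integral_prod_mul (fun x => w x * f x * g x) w,
    integral_prod_mul (fun x => w x * f x) (fun x => w x * g x),
    integral_prod_mul (fun x => w x * g x) (fun x => w x * f x)] at hnonneg
  linarith

theorem ConcaveOn.add_le_add_of_add_eq {s : Set ℝ} {L : ℝ → ℝ} (hL : ConcaveOn ℝ s L)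
    {a b c d : ℝ} (ha : a ∈ s) (hd : d ∈ s) (hab : a ≤ b) (hbd : b ≤ d) (hac : a ≤ c)
    (hsum : a + d = b + c) : L a + L d ≤ L b + L c := by
  rcases (hab.trans hbd).eq_or_lt with had | had
  · obtain rfl : b = a := le_antisymm (had ▸ hbd) hab
    obtain rfl : c = d := by linarith
    rfl
  -- `b` and `c` are the mirror-image convex combinations of `a` and `d`
  set t := (d - b) / (d - a)
  have ht : t * (d - a) = d - b := div_mul_cancel₀ _ (sub_pos.2 had).ne'
  have ht0 : 0 ≤ t := div_nonneg (by linarith) (by linarith)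
  have ht1 : t ≤ 1 := (div_le_one (by linarith)).2 (by linarith)
  have hb := hL.2 ha hd ht0 (sub_nonneg.2 ht1) (by ring)
  have hc := hL.2 ha hd (sub_nonneg.2 ht1) ht0 (by ring)
  simp only [smul_eq_mul] at hb hc
  rw [show t * a + (1 - t) * d = b by linarith] at hb
  rw [show (1 - t) * a + t * d = c by linarith] at hc
  linarith

theorem ConcaveOn.antitoneOn_of_even {L : ℝ → ℝ} (hL : ConcaveOn ℝ univ L)
    (he : Function.Even L) : AntitoneOn L (Ici 0) := by
  intro a ha b hb hab
  have hmem : a ∈ segment ℝ (-b) b := by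
    rw [segment_eq_Icc (by linarith [mem_Ici.1 hb])]
    exact ⟨by linarith [mem_Ici.1 ha], hab⟩
  simpa only [he b, min_self] using hL.ge_on_segment (mem_univ _) (mem_univ _) hmem

theorem ConcaveOn.add_le_add_sub_add_of_even {L : ℝ → ℝ} (hL : ConcaveOn ℝ univ L)
    (he : Function.Even L) {s u v : ℝ} (hs : 0 ≤ s) (huv : u ≤ v) :
    L (s - u) + L (s + v) ≤ L (s - v) + L (s + u) := by
  rw [← neg_sub u s, ← neg_sub v s, he, he]
  exact hL.add_le_add_of_add_eq (mem_univ _) (mem_univ _) (by linarith) (by linarith)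
    (by linarith) (by ring)

theorem ConcaveOn.add_le_add_div_of_even {L : ℝ → ℝ} (hL : ConcaveOn ℝ univ L)
    (he : Function.Even L) {k k' u v : ℝ} (hk' : 0 < k') (hk : k' < k) (hu : 0 ≤ u)
    (huv : u ≤ v) : L (u / k) + L (v / k') ≤ L (v / k) + L (u / k') := by
  have hk0 : 0 < k := hk'.trans hk
  have hb : u / k ≤ v / k := by gcongr
  have hc : u / k ≤ u / k' := div_le_div_of_nonneg_left hu hk' hk.le
  have hgap : v / k - u / k ≤ v / k' - u / k' := by
    rw [← sub_div, ← sub_div]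
    exact div_le_div_of_nonneg_left (by linarith) hk' hk.le
  -- pull `v / k'` in to `u / k' + (v / k - u / k)`, which completes a four-point configuration
  have hfar : L (v / k') ≤ L (u / k' + (v / k - u / k)) :=
    hL.antitoneOn_of_even he (mem_Ici.2 (by linarith [div_nonneg hu hk'.le]))
      (mem_Ici.2 (div_nonneg (hu.trans huv) hk'.le)) (by linarith)
  have h4 := hL.add_le_add_of_add_eq (mem_univ (u / k)) (mem_univ (u / k' + (v / k - u / k)))
    hb (by linarith) hc (by ring)
  linarith

theorem mul_le_mul_of_log_add_log_le {x y x' y' : ℝ} (hx : 0 < x) (hy : 0 < y) (hx' : 0 < x')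
    (hy' : 0 < y') (h : log x + log y ≤ log x' + log y') : x * y ≤ x' * y' := by
  rw [← log_le_log_iff (mul_pos hx hy) (mul_pos hx' hy'), log_mul hx.ne' hy.ne',
    log_mul hx'.ne' hy'.ne']
  exact h

theorem integral_eq_setIntegral_Ioi_add_comp_neg {g : ℝ → ℝ} (hg : Integrable g) :
    ∫ x, g x = ∫ x in Ioi 0, (g x + g (-x)) := by
  rw [← intervalIntegral.integral_Iic_add_Ioi hg.integrableOn hg.integrableOn,
    integral_add hg.integrableOn hg.comp_neg.integrableOn, add_comm, ← neg_zero,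
    ← integral_comp_neg_Ioi, neg_zero]

theorem postMean_neg {p φ : ℝ → ℝ} (hp : Function.Even p) (hφ : Function.Even φ)
    (s : ℝ) :
    postMean p φ (-s) = -postMean p φ s := by
  have hφ' : ∀ x, φ (-s - -x) = φ (s - x) := fun x => by rw [← neg_sub', hφ]
  unfold postMean
  rw [← integral_neg_eq_self (fun x => x * p x * φ (-s - x)),
    ← integral_neg_eq_self (fun x => p x * φ (-s - x))]
  simp only [hp _, hφ', neg_mul, integral_neg, neg_div]

structure SymmLogConcave (φ : ℝ → ℝ) : Prop where
  pos : ∀ x, 0 < φ x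
  continuous : Continuous φ
  even : Function.Even φ
  logConcave : LogConcaveFn φ

structure SymmPrior (p : ℝ → ℝ) : Prop where
  pos : ∀ x, 0 < p x
  even : Function.Even p
  integrable : Integrable p
  integrable_abs_mul : Integrable fun x => |x| * p x

/-- For a prior symmetric about `0`, the posterior mean of `X` given `S = s` and `|X| = x`. -/
def foldedPostMean (φ : ℝ → ℝ) (s x : ℝ) : ℝ :=
  x * ((φ (s - x) - φ (s + x)) / (φ (s - x) + φ (s + x)))

namespace SymmLogConcave

variable {φ : ℝ → ℝ}

theorem le_apply_zero (hφ : SymmLogConcave φ) (y : ℝ) : φ y ≤ φ 0 := by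
  wlog hy : 0 ≤ y
  · rw [← hφ.even y]
    exact this hφ (-y) (by linarith)
  exact (log_le_log_iff (hφ.pos _) (hφ.pos _)).1 <|
    hφ.logConcave.antitoneOn_of_even (hφ.even.left_comp log) self_mem_Ici hy hy

/-- Monotone likelihood ratio: for `s ≥ 0`, the signal favours `x` over `-x` more and more as `x`
grows. -/
theorem mul_le_mul_sub_add (hφ : SymmLogConcave φ) {s u v : ℝ} (hs : 0 ≤ s) (huv : u ≤ v) :
    φ (s - u) * φ (s + v) ≤ φ (s - v) * φ (s + u) :=
  mul_le_mul_of_log_add_log_le (hφ.pos _) (hφ.pos _) (hφ.pos _) (hφ.pos _)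
    (hφ.logConcave.add_le_add_sub_add_of_even (hφ.even.left_comp log) hs huv)

theorem apply_add_le_apply_sub (hφ : SymmLogConcave φ) {s x : ℝ} (hs : 0 ≤ s) (hx : 0 ≤ x) :
    φ (s + x) ≤ φ (s - x) := by
  have h := hφ.mul_le_mul_sub_add hs hx
  rw [sub_zero, add_zero, mul_comm (φ (s - x))] at h
  exact le_of_mul_le_mul_left h (hφ.pos s)

theorem integrable_mul_comp {p g : ℝ → ℝ} (hφ : SymmLogConcave φ) (hp : Integrable p)
    (hg : Continuous g) : Integrable fun x => p x * φ (g x) :=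
  hp.mul_bdd (hφ.continuous.comp hg).aestronglyMeasurable
    (ae_of_all _ fun x => by
      rw [norm_of_nonneg (hφ.pos _).le]
      exact hφ.le_apply_zero _)

theorem integrable_mul_add {p : ℝ → ℝ} (hφ : SymmLogConcave φ) (hp : Integrable p)
    (s : ℝ) :
    Integrable fun x => p x * (φ (s - x) + φ (s + x)) := by
  simpa only [mul_add] using (hφ.integrable_mul_comp hp (g := (s - ·)) (by fun_prop)).fun_add
    (hφ.integrable_mul_comp hp (g := (s + ·)) (by fun_prop))

theorem integrable_mul_sub {p : ℝ → ℝ} (hφ : SymmLogConcave φ) (hp : Integrable p)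
    (s : ℝ) :
    Integrable fun x => p x * (φ (s - x) - φ (s + x)) := by
  simpa only [mul_sub, Pi.sub_def] using
    (hφ.integrable_mul_comp hp (g := (s - ·)) (by fun_prop)).sub
      (hφ.integrable_mul_comp hp (g := (s + ·)) (by fun_prop))

theorem foldedPostMean_nonneg (hφ : SymmLogConcave φ) {s x : ℝ} (hs : 0 ≤ s) (hx : 0 ≤ x) :
    0 ≤ foldedPostMean φ s x :=
  mul_nonneg hx (div_nonneg (sub_nonneg.2 (hφ.apply_add_le_apply_sub hs hx))
    (add_pos (hφ.pos _) (hφ.pos _)).le)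

theorem monotoneOn_foldedPostMean (hφ : SymmLogConcave φ) {s : ℝ} (hs : 0 ≤ s) :
    MonotoneOn (foldedPostMean φ s) (Ici 0) := by
  have hratio : MonotoneOn (fun x => (φ (s - x) - φ (s + x)) / (φ (s - x) + φ (s + x)))
      (Ici 0) := by
    intro u _ v _ huv
    rw [div_le_div_iff₀ (add_pos (hφ.pos _) (hφ.pos _)) (add_pos (hφ.pos _) (hφ.pos _))]
    linarith [hφ.mul_le_mul_sub_add hs huv]
  exact monotoneOn_id.mul hratio (fun x hx => hx) fun x hx =>
    div_nonneg (sub_nonneg.2 (hφ.apply_add_le_apply_sub hs hx))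
      (add_pos (hφ.pos _) (hφ.pos _)).le

end SymmLogConcave

namespace SymmPrior

variable {p q φ : ℝ → ℝ}

theorem scale (hp : SymmPrior p) {k : ℝ} (hk : 0 < k) : SymmPrior fun x => 1 / k * p (x / k) where
  pos x := mul_pos (by positivity) (hp.pos _)
  even x := by simp only [neg_div]; rw [hp.even]
  integrable := by
    simpa only [div_eq_inv_mul, mul_one] using
      (hp.integrable.comp_mul_left' (inv_ne_zero hk.ne')).const_mul k⁻¹
  integrable_abs_mul := by
    have h := hp.integrable_abs_mul.comp_mul_left' (inv_ne_zero hk.ne')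
    refine h.congr (ae_of_all _ fun x => ?_)
    simp only [abs_mul, abs_inv, abs_of_pos hk]
    ring_nf

theorem integrable_mul (hp : SymmPrior p) : Integrable fun x => x * p x :=
  hp.integrable_abs_mul.mono (continuous_id.aestronglyMeasurable.mul hp.integrable.1)
    (ae_of_all _ fun x => by simp [abs_of_pos (hp.pos x)])

theorem weight_mul_foldedPostMean (hφ : SymmLogConcave φ) (s x : ℝ) :
    p x * (φ (s - x) + φ (s + x)) * foldedPostMean φ s x =
      x * p x * (φ (s - x) - φ (s + x)) := by
  have := (add_pos (hφ.pos (s - x)) (hφ.pos (s + x))).ne'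
  unfold foldedPostMean
  field_simp

theorem postMean_eq_setIntegral_Ioi (hp : SymmPrior p) (hφ : SymmLogConcave φ) (s : ℝ) :
    postMean p φ s =
      (∫ x in Ioi 0, p x * (φ (s - x) + φ (s + x)) * foldedPostMean φ s x) /
        ∫ x in Ioi 0, p x * (φ (s - x) + φ (s + x)) := by
  unfold postMean
  rw [integral_eq_setIntegral_Ioi_add_comp_neg (hφ.integrable_mul_comp hp.integrable_mul
      (g := (s - ·)) (by fun_prop)),
    integral_eq_setIntegral_Ioi_add_comp_neg (hφ.integrable_mul_comp hp.integrable
      (g := (s - ·)) (by fun_prop))]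
  simp only [weight_mul_foldedPostMean hφ, hp.even _, sub_neg_eq_add]
  congr 1 <;> refine setIntegral_congr_fun measurableSet_Ioi fun x _ => by ring

theorem setIntegral_weight_pos (hp : SymmPrior p) (hφ : SymmLogConcave φ) (s : ℝ) :
    0 < ∫ x in Ioi 0, p x * (φ (s - x) + φ (s + x)) := by
  have hw : ∀ x, 0 < p x * (φ (s - x) + φ (s + x)) := fun x =>
    mul_pos (hp.pos x) (add_pos (hφ.pos _) (hφ.pos _))
  refine (setIntegral_pos_iff_support_of_nonneg_ae (ae_of_all _ fun x => (hw x).le)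
    (hφ.integrable_mul_add hp.integrable s).integrableOn).2 ?_
  rw [Function.support_eq_univ fun x => (hw x).ne', univ_inter, Real.volume_Ioi]
  exact ENNReal.zero_lt_top

theorem postMean_nonneg (hp : SymmPrior p) (hφ : SymmLogConcave φ) {s : ℝ} (hs : 0 ≤ s) :
    0 ≤ postMean p φ s := by
  rw [hp.postMean_eq_setIntegral_Ioi hφ]
  exact div_nonneg
    (setIntegral_nonneg measurableSet_Ioi fun x hx => mul_nonneg
      (mul_nonneg (hp.pos x).le (add_pos (hφ.pos _) (hφ.pos _)).le)
      (hφ.foldedPostMean_nonneg hs (le_of_lt hx)))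
    (hp.setIntegral_weight_pos hφ s).le

theorem postMean_le_postMean_of_lessPrecise (hp : SymmPrior p) (hq : SymmPrior q)
    (hqp : LessPrecise q p) (hφ : SymmLogConcave φ) {s : ℝ} (hs : 0 ≤ s) :
    postMean p φ s ≤ postMean q φ s := by
  have htilt : ∀ x, p x * (φ (s - x) + φ (s + x)) * (q x / p x) =
      q x * (φ (s - x) + φ (s + x)) := fun x => by
    field_simp [(hp.pos x).ne']
  have h := (hqp.monovaryOn ((hφ.monotoneOn_foldedPostMean hs).mono Ioi_subset_Ici_self)
    ).setIntegral_mul_setIntegral_le measurableSet_Ioi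
    (fun x _ => (mul_pos (hp.pos x) (add_pos (hφ.pos _) (hφ.pos _))).le)
    (hφ.integrable_mul_add hp.integrable s).integrableOn
    (by simpa only [htilt] using (hφ.integrable_mul_add hq.integrable s).integrableOn)
    (by simpa only [weight_mul_foldedPostMean hφ] using
      (hφ.integrable_mul_sub hp.integrable_mul s).integrableOn)
    (by simpa only [htilt, weight_mul_foldedPostMean hφ] using
      (hφ.integrable_mul_sub hq.integrable_mul s).integrableOn)
  simp only [htilt] at h
  rw [hp.postMean_eq_setIntegral_Ioi hφ, hq.postMean_eq_setIntegral_Ioi hφ,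
    div_le_div_iff₀ (hp.setIntegral_weight_pos hφ s) (hq.setIntegral_weight_pos hφ s)]
  linarith

end SymmPrior

theorem lessPrecise_scale {f : ℝ → ℝ} (hpos : ∀ x, 0 < f x) (heven : Function.Even f)
    (hlc : LogConcaveFn f) {k k' : ℝ} (hk' : 0 < k') (hk : k' < k) :
    LessPrecise (fun x => 1 / k * f (x / k)) (fun x => 1 / k' * f (x / k')) := by
  intro u hu v hv huv
  have hk0 : 0 < k := hk'.trans hk
  have h := mul_le_mul_of_log_add_log_le (hpos _) (hpos _) (hpos _) (hpos _)
    (hlc.add_le_add_div_of_even (heven.left_comp log) hk' hk (le_of_lt hu) huv)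
  have := mul_le_mul_of_nonneg_left h (by positivity : (0 : ℝ) ≤ 1 / k * (1 / k'))
  dsimp only
  rw [div_le_div_iff₀ (mul_pos (by positivity) (hpos _)) (mul_pos (by positivity) (hpos _))]
  linarith

theorem SymmAbout.even {f : ℝ → ℝ} (h : SymmAbout 0 f) : Function.Even f := fun x => by
  simpa using (h x).symm

theorem IsDensity.integrable {f : ℝ → ℝ} (h : IsDensity f) : Integrable f := by
  by_contra hf
  simpa [integral_undef hf] using h.2.2.1

/-- Corollary 3: scaling down the prior attenuates updating. -/
theorem scaling_down_prior_attenuates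
    (fX fε : ℝ → ℝ)
    (hfX : IsDensity fX) (hfXsym : SymmAbout 0 fX) (hfXlc : LogConcaveFn fX)
    (hfε : IsDensity fε) (hfεsym : SymmAbout 0 fε) (hfεlc : LogConcaveFn fε)
    (k k' : ℝ) (hk' : 0 < k') (hk : k' < k) :
    (∀ s ≤ (0 : ℝ),
        postMean (fun x => (1 / k) * fX (x / k)) fε s ≤
          postMean (fun x => (1 / k') * fX (x / k')) fε s ∧
        postMean (fun x => (1 / k') * fX (x / k')) fε s ≤ 0) ∧
    (∀ s : ℝ, 0 ≤ s →
        0 ≤ postMean (fun x => (1 / k') * fX (x / k')) fε s ∧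
        postMean (fun x => (1 / k') * fX (x / k')) fε s ≤
          postMean (fun x => (1 / k) * fX (x / k)) fε s) := by
  have hX : SymmPrior fX := ⟨hfX.1, hfXsym.even, hfX.integrable, hfX.2.2.2⟩
  have hε : SymmLogConcave fε := ⟨hfε.1, hfε.2.1.continuous, hfεsym.even, hfεlc⟩
  have hright : ∀ s, 0 ≤ s →
      0 ≤ postMean (fun x => (1 / k') * fX (x / k')) fε s ∧
        postMean (fun x => (1 / k') * fX (x / k')) fε s ≤
          postMean (fun x => (1 / k) * fX (x / k)) fε s := fun s hs =>
    ⟨(hX.scale hk').postMean_nonneg hε hs,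
      (hX.scale hk').postMean_le_postMean_of_lessPrecise (hX.scale (hk'.trans hk))
        (lessPrecise_scale hX.pos hX.even hfXlc hk' hk) hε hs⟩
  refine ⟨fun s hs => ?_, hright⟩
  obtain ⟨hnonneg, hle⟩ := hright (-s) (neg_nonneg.2 hs)
  rw [postMean_neg (hX.scale hk').even hε.even, postMean_neg (hX.scale (hk'.trans hk)).even
    hε.even] at hle
  rw [postMean_neg (hX.scale hk').even hε.even] at hnonneg
  exact ⟨neg_le_neg_iff.1 hle, neg_nonneg.1 hnonneg⟩
end
end

section
/- Average posterior mean lies between the state and the prior mean (Proposition 1). Let f_X be a quasi-concave density symmetric about its mean μ, and let f_ε be a quasi-concave density symmetric about 0. Let m(s) := E[X|S=s] denote the posterior mean given signal realization s. Then for every state x ≤ μ: x ≤ ∫ m(s)·f_ε(s−x) ds ≤ μ, and for every state x ≥ μ: μ ≤ ∫ m(s)·f_ε(s−x) ds ≤ x. (Here ∫ m(s)·f_ε(s−x) ds is the average posterior mean conditional on X = x.) -/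
open MeasureTheory Real Set

noncomputable section

/-!
Pairing the points `c ± u`, the integral of `h * B`, with `h` odd about `c` and nonnegative to its
right and `B` symmetric and unimodal about `b`, has the sign of `b - c`: the weight `B (c + u)`
exceeds `B (c - u)` exactly when `c` lies to the left of `b`. Symmetric quasi-concave densities are
unimodal. Applied to `h x = (x - μ) fX x` against `fε (s - x)` and to `h x = (x - s) fε (s - x)`
against `fX x`, this puts the posterior mean `m s` between `s` and `μ`. Since `m` is odd about `μ`,
`m (2μ - s) = 2μ - m s`, the same argument for `m - μ` and `id - m` against `fε (· - x)` puts the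
average posterior mean between `x` and `μ`.
-/

theorem QuasiConcaveFn.min_le_of_mem_uIcc {f : ℝ → ℝ} (hf : QuasiConcaveFn f) {x y z : ℝ}
    (hz : z ∈ uIcc x y) : min (f x) (f y) ≤ f z := by
  wlog hxy : x < y generalizing x y
  · rcases (not_lt.mp hxy).eq_or_lt with rfl | hyx
    · simp_all
    · rw [min_comm]; exact this (uIcc_comm x y ▸ hz) hyx
  obtain ⟨hxz, hzy⟩ := (uIcc_of_le hxy.le ▸ hz : z ∈ Icc x y)
  have hyx : 0 < y - x := sub_pos.mpr hxy
  convert hf x y ((y - z) / (y - x)) (by positivity) ((div_le_one hyx).mpr (by linarith))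
    using 2
  field_simp
  ring

def SymmUnimodal (c : ℝ) (f : ℝ → ℝ) : Prop :=
  ∀ x y : ℝ, |x - c| ≤ |y - c| → f y ≤ f x

theorem SymmAbout.symmUnimodal {c : ℝ} {f : ℝ → ℝ} (hsym : SymmAbout c f)
    (hqc : QuasiConcaveFn f) : SymmUnimodal c f := by
  intro x y hxy
  have hrefl : f (2 * c - y) = f y := by
    have := (hsym (y - c)).symm
    rwa [add_sub_cancel, show c - (y - c) = 2 * c - y by ring] at this
  have hx : x ∈ uIcc y (2 * c - y) := by
    rw [abs_le] at hxy
    rcases le_total c y with hcy | hyc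
    · rw [abs_of_nonneg (sub_nonneg.mpr hcy)] at hxy
      exact mem_uIcc.mpr <| Or.inr ⟨by linarith [hxy.1], by linarith [hxy.2]⟩
    · rw [abs_of_nonpos (sub_nonpos.mpr hyc)] at hxy
      exact mem_uIcc.mpr <| Or.inl ⟨by linarith [hxy.1], by linarith [hxy.2]⟩
  simpa [hrefl] using hqc.min_le_of_mem_uIcc hx

namespace SymmUnimodal

variable {c : ℝ} {f : ℝ → ℝ}

theorem apply_le (hf : SymmUnimodal c f) (y : ℝ) : f y ≤ f c :=
  hf c y (by simp)

theorem apply_sub (hf : SymmUnimodal c f) (u : ℝ) : f (c - u) = f (c + u) := by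
  have hdist : |c - u - c| = |c + u - c| := by simp
  exact le_antisymm (hf _ _ hdist.ge) (hf _ _ hdist.le)

theorem apply_two_mul_sub (hf : SymmUnimodal c f) (x : ℝ) : f (2 * c - x) = f x := by
  simpa [two_mul, sub_sub_eq_add_sub] using hf.apply_sub (x - c)

theorem apply_neg (hf : SymmUnimodal 0 f) (x : ℝ) : f (-x) = f x := by
  simpa using hf.apply_sub x

theorem comp_sub_right (hf : SymmUnimodal c f) (a : ℝ) :
    SymmUnimodal (c + a) (fun y => f (y - a)) := fun x y hxy =>
  hf _ _ (by simpa only [sub_sub, add_comm a c] using hxy)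

theorem comp_sub_left (hf : SymmUnimodal c f) (a : ℝ) :
    SymmUnimodal (a - c) (fun y => f (a - y)) := fun x y hxy =>
  hf _ _ (by simpa only [sub_right_comm a _ c, abs_sub_comm (a - c)] using hxy)

theorem apply_add_le_apply_sub {b : ℝ} (hf : SymmUnimodal b f) (hbc : b ≤ c) {u : ℝ}
    (hu : 0 ≤ u) : f (c + u) ≤ f (c - u) :=
  hf _ _ (by rw [abs_of_nonneg (by linarith : 0 ≤ c + u - b), abs_le]; constructor <;> linarith)

theorem apply_sub_le_apply_add {b : ℝ} (hf : SymmUnimodal b f) (hcb : c ≤ b) {u : ℝ}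
    (hu : 0 ≤ u) : f (c - u) ≤ f (c + u) :=
  hf _ _ (by rw [abs_of_nonpos (by linarith : c - u - b ≤ 0), abs_le]; constructor <;> linarith)

end SymmUnimodal

theorem integral_nonneg_of_add_reflect_nonneg {φ : ℝ → ℝ} (hφ : Integrable φ) (c : ℝ)
    (h : ∀ u, 0 ≤ u → 0 ≤ φ (c + u) + φ (c - u)) : 0 ≤ ∫ x, φ x := by
  have hpair : ∫ u, (φ (c + u) + φ (c - u)) = 2 * ∫ x, φ x := by
    rw [integral_add (hφ.comp_add_left c) (hφ.comp_sub_left c), integral_add_left_eq_self,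
      integral_sub_left_eq_self]
    ring
  have hpair_nonneg : 0 ≤ ∫ u, (φ (c + u) + φ (c - u)) := integral_nonneg fun u => by
    rcases le_total 0 u with hu | hu
    · exact h u hu
    · simpa [add_comm, sub_eq_add_neg] using h (-u) (neg_nonneg.mpr hu)
  linarith

section OddMulSymmUnimodal

variable {h B : ℝ → ℝ} {b c : ℝ}

theorem integral_odd_mul_symmUnimodal_nonneg (hodd : ∀ u, h (c - u) = -h (c + u))
    (hsign : ∀ u, 0 ≤ u → 0 ≤ h (c + u)) (hB : SymmUnimodal b B) (hcb : c ≤ b)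
    (hint : Integrable fun x => h x * B x) : 0 ≤ ∫ x, h x * B x :=
  integral_nonneg_of_add_reflect_nonneg hint c fun u hu => by
    have hBu := hB.apply_sub_le_apply_add hcb hu
    rw [hodd]
    nlinarith [mul_nonneg (hsign u hu) (sub_nonneg.mpr hBu)]

theorem integral_odd_mul_symmUnimodal_nonpos (hodd : ∀ u, h (c - u) = -h (c + u))
    (hsign : ∀ u, 0 ≤ u → 0 ≤ h (c + u)) (hB : SymmUnimodal b B) (hbc : b ≤ c)
    (hint : Integrable fun x => h x * B x) : ∫ x, h x * B x ≤ 0 := by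
  have := integral_nonneg_of_add_reflect_nonneg (φ := fun x => -(h x * B x)) hint.neg c
    fun u hu => by
      have hBu := hB.apply_add_le_apply_sub hbc hu
      rw [hodd]
      nlinarith [mul_nonneg (hsign u hu) (sub_nonneg.mpr hBu)]
  rwa [integral_neg, neg_nonneg] at this

end OddMulSymmUnimodal

namespace IsDensity

variable {f : ℝ → ℝ}

theorem pos (hf : IsDensity f) (x : ℝ) : 0 < f x :=
  hf.1 x

theorem integral_eq_one (hf : IsDensity f) : ∫ x, f x = 1 :=
  hf.2.2.1

theorem continuous (hf : IsDensity f) : Continuous f :=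
  hf.2.1.continuous

theorem integrable_s7 (hf : IsDensity f) : Integrable f :=
  Integrable.of_integral_ne_zero (by rw [hf.integral_eq_one]; exact one_ne_zero)

theorem integrable_id_mul (hf : IsDensity f) : Integrable fun x => x * f x :=
  hf.2.2.2.mono' (continuous_id.mul hf.continuous).aestronglyMeasurable
    (ae_of_all _ fun x => by
      rw [norm_mul, Real.norm_eq_abs, Real.norm_of_nonneg (hf.pos x).le])

theorem integrable_sub_mul (hf : IsDensity f) (a : ℝ) : Integrable fun x => (x - a) * f x := by
  simpa only [sub_mul, Pi.sub_def] using hf.integrable_id_mul.sub (hf.integrable_s7.const_mul a)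

theorem integrable_id_mul_comp_sub (hf : IsDensity f) (a : ℝ) :
    Integrable fun s => s * f (s - a) := by
  simpa only [Pi.add_def, ← add_mul, sub_add_cancel] using
    (hf.integrable_id_mul.comp_sub_right a).add ((hf.integrable_s7.comp_sub_right a).const_mul a)

theorem integral_comp_sub (hf : IsDensity f) (a : ℝ) : ∫ s, f (s - a) = 1 := by
  rw [integral_sub_right_eq_self f a, hf.integral_eq_one]

theorem integral_id_mul_comp_sub (hf : IsDensity f) (heven : ∀ u, f (-u) = f u) (a : ℝ) :
    ∫ s, s * f (s - a) = a := by
  have hmean : ∫ u, u * f u = 0 := by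
    have := integral_neg_eq_self (fun u => u * f u) volume
    simp only [heven, neg_mul, integral_neg] at this
    linarith
  have hshift := integral_sub_right_eq_self (μ := volume) (fun u => (u + a) * f u) a
  simp only [sub_add_cancel] at hshift
  rw [hshift]
  simp only [add_mul]
  rw [integral_add hf.integrable_id_mul (hf.integrable_s7.const_mul a), integral_const_mul,
    hmean, hf.integral_eq_one]
  ring

end IsDensity

def signalDensity (fX fε : ℝ → ℝ) (s : ℝ) : ℝ :=
  ∫ x, fX x * fε (s - x)

section Posterior

variable {fX fε : ℝ → ℝ} {μ : ℝ}

theorem integrable_mul_comp_sub {g : ℝ → ℝ} (hg : Integrable g) (hfε : IsDensity fε)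
    (hε : SymmUnimodal 0 fε) (s : ℝ) : Integrable fun x => g x * fε (s - x) :=
  hg.mul_bdd (hfε.continuous.comp (continuous_sub_left s)).aestronglyMeasurable
    (ae_of_all _ fun x => by
      rw [Real.norm_of_nonneg (hfε.pos _).le]
      exact hε.apply_le _)

theorem signalDensity_pos (hfX : IsDensity fX) (hfε : IsDensity fε) (hε : SymmUnimodal 0 fε)
    (s : ℝ) : 0 < signalDensity fX fε s := by
  have hpos : ∀ x, 0 < fX x * fε (s - x) := fun x => mul_pos (hfX.pos x) (hfε.pos _)
  rw [signalDensity, integral_pos_iff_support_of_nonneg (fun x => (hpos x).le)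
    (integrable_mul_comp_sub hfX.integrable_s7 hfε hε s),
    Function.support_eq_univ fun x => (hpos x).ne']
  simp

theorem postMean_sub_eq_div (hfX : IsDensity fX) (hfε : IsDensity fε) (hε : SymmUnimodal 0 fε)
    (s a : ℝ) : postMean fX fε s - a =
      (∫ x, (x - a) * fX x * fε (s - x)) / signalDensity fX fε s := by
  have hD := (signalDensity_pos hfX hfε hε s).ne'
  have hsplit : ∫ x, (x - a) * fX x * fε (s - x) =
      (∫ x, x * fX x * fε (s - x)) - a * signalDensity fX fε s := by
    rw [signalDensity, ← integral_const_mul,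
      ← integral_sub (integrable_mul_comp_sub hfX.integrable_id_mul hfε hε s)
        ((integrable_mul_comp_sub hfX.integrable_s7 hfε hε s).const_mul a)]
    congr 1
    ext x
    ring
  rw [hsplit, sub_div, mul_div_cancel_right₀ _ hD]
  rfl

theorem integral_mul_comp_two_mul_sub (hX : SymmUnimodal μ fX) (hε : SymmUnimodal 0 fε)
    (φ : ℝ → ℝ) (s : ℝ) : ∫ x, φ x * (fX x * fε (2 * μ - s - x)) =
      ∫ x, φ (2 * μ - x) * (fX x * fε (s - x)) := by
  rw [← integral_sub_left_eq_self _ volume (2 * μ)]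
  congr 1
  ext x
  rw [hX.apply_two_mul_sub, show 2 * μ - s - (2 * μ - x) = -(s - x) by ring, hε.apply_neg]

theorem postMean_two_mul_sub (hfX : IsDensity fX) (hX : SymmUnimodal μ fX)
    (hfε : IsDensity fε) (hε : SymmUnimodal 0 fε) (s : ℝ) :
    postMean fX fε (2 * μ - s) = 2 * μ - postMean fX fε s := by
  have hD : signalDensity fX fε (2 * μ - s) = signalDensity fX fε s := by
    simpa only [one_mul, signalDensity] using integral_mul_comp_two_mul_sub hX hε (fun _ => 1) s
  have hsub := postMean_sub_eq_div hfX hfε hε (2 * μ - s) (2 * μ)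
  have hrefl := integral_mul_comp_two_mul_sub hX hε (fun x => x - 2 * μ) s
  simp only [sub_sub_cancel_left, neg_mul, integral_neg, ← mul_assoc] at hrefl
  rw [hrefl, hD, neg_div] at hsub
  change _ = -postMean fX fε s at hsub
  linarith

theorem measurable_postMean (hX : Measurable fX) (hε : Measurable fε) :
    Measurable (postMean fX fε) := by
  have hN := StronglyMeasurable.integral_prod_right' (ν := volume)
    (f := fun p : ℝ × ℝ => p.2 * fX p.2 * fε (p.1 - p.2)) (by fun_prop)
  have hD := StronglyMeasurable.integral_prod_right' (ν := volume)
    (f := fun p : ℝ × ℝ => fX p.2 * fε (p.1 - p.2)) (by fun_prop)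
  exact hN.measurable.div hD.measurable

theorem postMean_mem_uIcc (hfX : IsDensity fX) (hX : SymmUnimodal μ fX) (hfε : IsDensity fε)
    (hε : SymmUnimodal 0 fε) (s : ℝ) : postMean fX fε s ∈ uIcc μ s := by
  have hD := (signalDensity_pos hfX hfε hε s).le
  have hoddμ (u : ℝ) : (μ - u - μ) * fX (μ - u) = -((μ + u - μ) * fX (μ + u)) := by
    rw [hX.apply_sub]; ring
  have hsignμ (u : ℝ) (hu : 0 ≤ u) : 0 ≤ (μ + u - μ) * fX (μ + u) := by
    rw [add_sub_cancel_left]; exact mul_nonneg hu (hfX.pos _).le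
  have hodds (u : ℝ) : (s - u - s) * fε (s - (s - u)) = -((s + u - s) * fε (s - (s + u))) := by
    rw [sub_sub_cancel, show s - (s + u) = -u by ring, hε.apply_neg]; ring
  have hsigns (u : ℝ) (hu : 0 ≤ u) : 0 ≤ (s + u - s) * fε (s - (s + u)) := by
    rw [add_sub_cancel_left]; exact mul_nonneg hu (hfε.pos _).le
  have hBs : SymmUnimodal s fun x => fε (s - x) := by simpa using hε.comp_sub_left s
  have hintμ := integrable_mul_comp_sub (hfX.integrable_sub_mul μ) hfε hε s
  have hints : Integrable fun x => (x - s) * fε (s - x) * fX x := by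
    simpa only [mul_right_comm] using integrable_mul_comp_sub (hfX.integrable_sub_mul s) hfε hε s
  have hμ := postMean_sub_eq_div hfX hfε hε s μ
  have hs := postMean_sub_eq_div hfX hfε hε s s
  simp only [mul_right_comm _ (fX _)] at hs
  rcases le_total μ s with hμs | hsμ
  · have h1 := integral_odd_mul_symmUnimodal_nonneg (h := fun x => (x - μ) * fX x)
      hoddμ hsignμ hBs hμs hintμ
    have h2 := integral_odd_mul_symmUnimodal_nonpos (h := fun x => (x - s) * fε (s - x))
      hodds hsigns hX hμs hints
    rw [uIcc_of_le hμs]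
    constructor
    · linarith [div_nonneg h1 hD]
    · linarith [div_nonpos_of_nonpos_of_nonneg h2 hD]
  · have h1 := integral_odd_mul_symmUnimodal_nonpos (h := fun x => (x - μ) * fX x)
      hoddμ hsignμ hBs hsμ hintμ
    have h2 := integral_odd_mul_symmUnimodal_nonneg (h := fun x => (x - s) * fε (s - x))
      hodds hsigns hX hsμ hints
    rw [uIcc_of_ge hsμ]
    constructor
    · linarith [div_nonneg h2 hD]
    · linarith [div_nonpos_of_nonpos_of_nonneg h1 hD]

theorem integrable_postMean_mul_comp_sub (hfX : IsDensity fX) (hX : SymmUnimodal μ fX)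
    (hfε : IsDensity fε) (hε : SymmUnimodal 0 fε) (a : ℝ) :
    Integrable fun s => postMean fX fε s * fε (s - a) := by
  have hbound : Integrable fun s => |s| * fε (s - a) + |μ| * fε (s - a) := by
    refine Integrable.fun_add ?_ ((hfε.integrable_s7.comp_sub_right a).const_mul _)
    simpa only [norm_mul, Real.norm_eq_abs, abs_of_pos (hfε.pos _)] using
      (hfε.integrable_id_mul_comp_sub a).norm
  refine hbound.mono' ?_ (ae_of_all _ fun s => ?_)
  · exact ((measurable_postMean hfX.continuous.measurable hfε.continuous.measurable).mul
      (hfε.continuous.measurable.comp (measurable_sub_const a))).aestronglyMeasurable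
  rw [norm_mul, Real.norm_eq_abs, Real.norm_of_nonneg (hfε.pos _).le, ← add_mul]
  refine mul_le_mul_of_nonneg_right ?_ (hfε.pos _).le
  rw [abs_le]
  rcases mem_uIcc.mp (postMean_mem_uIcc hfX hX hfε hε s) with ⟨h1, h2⟩ | ⟨h1, h2⟩ <;>
    constructor <;> linarith [neg_abs_le s, neg_abs_le μ, le_abs_self s, le_abs_self μ]

end Posterior

theorem integral_postMean_mul_mem_uIcc {fX fε : ℝ → ℝ} {μ : ℝ} (hfX : IsDensity fX)
    (hX : SymmUnimodal μ fX) (hfε : IsDensity fε) (hε : SymmUnimodal 0 fε) (x : ℝ) :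
    ∫ s, postMean fX fε s * fε (s - x) ∈ uIcc μ x := by
  set m := postMean fX fε
  have hm := integrable_postMean_mul_comp_sub hfX hX hfε hε x
  have hreflect (u : ℝ) : m (μ - u) = 2 * μ - m (μ + u) := by
    show postMean fX fε (μ - u) = _
    rw [← postMean_two_mul_sub hfX hX hfε hε]
    ring_nf
  have hright (u : ℝ) (hu : 0 ≤ u) : m (μ + u) ∈ Icc μ (μ + u) := by
    simpa [uIcc_of_le (le_add_of_nonneg_right hu)] using postMean_mem_uIcc hfX hX hfε hε (μ + u)
  have hB : SymmUnimodal x fun s => fε (s - x) := by simpa using hε.comp_sub_right x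
  have hoddμ (u : ℝ) : m (μ - u) - μ = -(m (μ + u) - μ) := by rw [hreflect]; ring
  have hsignμ (u : ℝ) (hu : 0 ≤ u) : 0 ≤ m (μ + u) - μ := sub_nonneg.mpr (hright u hu).1
  have hoddsub (u : ℝ) : μ - u - m (μ - u) = -(μ + u - m (μ + u)) := by rw [hreflect]; ring
  have hsignsub (u : ℝ) (hu : 0 ≤ u) : 0 ≤ μ + u - m (μ + u) := sub_nonneg.mpr (hright u hu).2
  have hintμ : Integrable fun s => (m s - μ) * fε (s - x) := by
    simpa only [sub_mul, Pi.sub_def] using hm.sub ((hfε.integrable_s7.comp_sub_right x).const_mul μ)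
  have hintsub : Integrable fun s => (s - m s) * fε (s - x) := by
    simpa only [sub_mul, Pi.sub_def] using (hfε.integrable_id_mul_comp_sub x).sub hm
  have heqμ : ∫ s, (m s - μ) * fε (s - x) = (∫ s, m s * fε (s - x)) - μ := by
    simp only [sub_mul]
    rw [integral_sub hm ((hfε.integrable_s7.comp_sub_right x).const_mul μ), integral_const_mul,
      hfε.integral_comp_sub, mul_one]
  have heqsub : ∫ s, (s - m s) * fε (s - x) = x - ∫ s, m s * fε (s - x) := by
    simp only [sub_mul]
    rw [integral_sub (hfε.integrable_id_mul_comp_sub x) hm,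
      hfε.integral_id_mul_comp_sub hε.apply_neg]
  rcases le_total μ x with hμx | hxμ
  · have h1 := integral_odd_mul_symmUnimodal_nonneg (h := fun s => m s - μ)
      hoddμ hsignμ hB hμx hintμ
    have h2 := integral_odd_mul_symmUnimodal_nonneg (h := fun s => s - m s)
      hoddsub hsignsub hB hμx hintsub
    rw [uIcc_of_le hμx]
    constructor <;> linarith
  · have h1 := integral_odd_mul_symmUnimodal_nonpos (h := fun s => m s - μ)
      hoddμ hsignμ hB hxμ hintμ
    have h2 := integral_odd_mul_symmUnimodal_nonpos (h := fun s => s - m s)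
      hoddsub hsignsub hB hxμ hintsub
    rw [uIcc_of_ge hxμ]
    constructor <;> linarith

theorem average_posterior_mean_between_general
    (fX fε : ℝ → ℝ) (μ : ℝ)
    (hfX : IsDensity fX) (hfXsym : SymmAbout μ fX) (hfXqc : QuasiConcaveFn fX)
    (hfε : IsDensity fε) (hfεsym : SymmAbout 0 fε) (hfεqc : QuasiConcaveFn fε) :
    (∀ x ≤ μ, x ≤ ∫ s, postMean fX fε s * fε (s - x) ∧
        (∫ s, postMean fX fε s * fε (s - x)) ≤ μ) ∧
    (∀ x, μ ≤ x → μ ≤ ∫ s, postMean fX fε s * fε (s - x) ∧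
        (∫ s, postMean fX fε s * fε (s - x)) ≤ x) := by
  have hmem := integral_postMean_mul_mem_uIcc hfX (hfXsym.symmUnimodal hfXqc) hfε
    (hfεsym.symmUnimodal hfεqc)
  exact ⟨fun x hx => by simpa only [uIcc_of_ge hx, mem_Icc] using hmem x,
    fun x hx => by simpa only [uIcc_of_le hx, mem_Icc] using hmem x⟩

/-- Proposition 1: the average posterior mean conditional on the state lies
between the state and the prior mean. -/
theorem average_posterior_mean_between
    (fX fε : ℝ → ℝ) (μ : ℝ)
    (hfX : IsDensity fX) (hfXsym : SymmAbout μ fX) (hfXqc : QuasiConcaveFn fX)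
    (hμ : μ = ∫ x, x * fX x)
    (hfε : IsDensity fε) (hfεsym : SymmAbout 0 fε) (hfεqc : QuasiConcaveFn fε) :
    (∀ x ≤ μ, x ≤ ∫ s, postMean fX fε s * fε (s - x) ∧
        (∫ s, postMean fX fε s * fε (s - x)) ≤ μ) ∧
    (∀ x, μ ≤ x → μ ≤ ∫ s, postMean fX fε s * fε (s - x) ∧
        (∫ s, postMean fX fε s * fε (s - x)) ≤ x) :=
  average_posterior_mean_between_general fX fε μ hfX hfXsym hfXqc hfε hfεsym hfεqc

end
end
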